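/- arXiv:2506.19648 — 3 statements merged into one kernel-verified Lean document; each statement's English description precedes it below -/
import Mathlib

section
/- Let X ~ Exp(λ) and Y ~ Hypoexp(μ₁, μ₂) be independent with μ₁ ≠ μ₂, Z = Y − X, Λ = {Y > X}, and w = μ₂(λ + μ₂) / ((μ₂ − μ₁)(λ + μ₁ + μ₂)). Then the conditional density of Z given Λ is f(z) = w·μ₁·exp(−μ₁ z) + (1−w)·μ₂·exp(−μ₂ z) for z > 0, i.e., a mixture of Exp(μ₁) and Exp(μ₂) with weights w and 1−w. -/
open MeasureTheory ProbabilityTheory Real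

/-- `X` is an exponential random variable with rate `r` under `μ`. -/
def IsExpRV {Ω : Type*} [MeasurableSpace Ω] (μ : Measure Ω) (r : ℝ) (X : Ω → ℝ) : Prop :=
  Measurable X ∧ ∀ t : ℝ, 0 ≤ t → μ {ω | X ω > t} = ENNReal.ofReal (Real.exp (-r * t))

/-- `X` is hypoexponential with (distinct) parameters `(a, b)` under `μ`, i.e. it is
distributed as the sum of independent `Exp(a)` and `Exp(b)` random variables. -/
def IsHypoexpRV {Ω : Type*} [MeasurableSpace Ω] (μ : Measure Ω) (a b : ℝ) (X : Ω → ℝ) : Prop :=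
  Measurable X ∧ ∀ t : ℝ, 0 ≤ t →
    μ {ω | X ω > t} =
      ENNReal.ofReal ((b * Real.exp (-a * t) - a * Real.exp (-b * t)) / (b - a))

/-! Writing `S` for the survival function of `Y`, independence gives
`P(Y - X > u) = E[S(X + u)]`. Since `S` is a combination of `e^{-μ₁ t}` and `e^{-μ₂ t}`, the
Laplace transform `E[e^{-μ X}] = λ / (λ + μ)` of `Exp(λ)` yields
`P(Z > u) = c (w e^{-μ₁ u} + (1 - w) e^{-μ₂ u})` for `u ≥ 0`, with `c = P(Z > 0) = P(Λ) > 0`.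
As `{Z > s} ⊆ Λ`, dividing by `P(Λ)` leaves the survival function of the mixture. -/

open Set

lemma integral_Ioi_exp_neg_mul {c : ℝ} (hc : 0 < c) (s : ℝ) :
    ∫ x in Ioi s, exp (-c * x) = exp (-c * s) / c := by
  rw [integral_exp_mul_Ioi (neg_lt_zero.mpr hc), div_neg, neg_div, neg_neg]

lemma integral_Ioi_mul_exp_neg_mul {c : ℝ} (hc : 0 < c) (s : ℝ) :
    ∫ x in Ioi s, c * exp (-c * x) = exp (-c * s) := by
  rw [integral_const_mul, integral_Ioi_exp_neg_mul hc, mul_div_cancel₀ _ hc.ne']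

lemma mul_exp_mul_exp_add_eq (r c u x : ℝ) :
    r * exp (-r * x) * exp (-c * (x + u)) = r * exp (-c * u) * exp (-(r + c) * x) := by
  rw [mul_assoc, mul_assoc, ← exp_add, ← exp_add]
  ring_nf

lemma integrableOn_mul_exp_mul_exp_add {r c : ℝ} (h : 0 < r + c) (u : ℝ) :
    IntegrableOn (fun x => r * exp (-r * x) * exp (-c * (x + u))) (Ioi 0) := by
  simp_rw [mul_exp_mul_exp_add_eq]
  exact (exp_neg_integrableOn_Ioi 0 h).const_mul _

lemma integral_mul_exp_mul_exp_add {r c : ℝ} (h : 0 < r + c) (u : ℝ) :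
    ∫ x in Ioi 0, r * exp (-r * x) * exp (-c * (x + u)) = r / (r + c) * exp (-c * u) := by
  simp_rw [mul_exp_mul_exp_add_eq]
  rw [integral_const_mul, integral_Ioi_exp_neg_mul h, mul_zero, exp_zero]
  ring

lemma hypoexp_survival_nonneg {a b t : ℝ} (ha : 0 ≤ a) (hb : 0 ≤ b) (ht : 0 ≤ t) :
    0 ≤ (b * exp (-a * t) - a * exp (-b * t)) / (b - a) := by
  rcases lt_trichotomy a b with hab | rfl | hab
  · have : exp (-b * t) ≤ exp (-a * t) := exp_le_exp.mpr (by nlinarith)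
    apply div_nonneg _ (by linarith)
    nlinarith [exp_pos (-a * t)]
  · simp
  · have : exp (-a * t) ≤ exp (-b * t) := exp_le_exp.mpr (by nlinarith)
    apply div_nonneg_of_nonpos _ (by linarith)
    nlinarith [exp_pos (-b * t)]

lemma integral_Ioi_exp_mixture {a b : ℝ} (ha : 0 < a) (hb : 0 < b) (w s : ℝ) :
    ∫ z in Ioi s, (w * a * exp (-a * z) + (1 - w) * b * exp (-b * z)) =
      w * exp (-a * s) + (1 - w) * exp (-b * s) := by
  simp_rw [mul_assoc]
  rw [integral_add (((exp_neg_integrableOn_Ioi s ha).const_mul a).const_mul w)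
      (((exp_neg_integrableOn_Ioi s hb).const_mul b).const_mul (1 - w)),
    integral_const_mul w, integral_const_mul (1 - w), integral_Ioi_mul_exp_neg_mul ha,
    integral_Ioi_mul_exp_neg_mul hb]

lemma hypoexp_exp_survival_eq_mul_mixture {r a b w : ℝ} (hr : 0 < r) (ha : 0 < a) (hb : 0 < b)
    (hab : a ≠ b) (hw : w = b * (r + b) / ((b - a) * (r + a + b))) (u : ℝ) :
    (b * (r / (r + a) * exp (-a * u)) - a * (r / (r + b) * exp (-b * u))) / (b - a) =
      r * (r + a + b) / ((r + a) * (r + b)) * (w * exp (-a * u) + (1 - w) * exp (-b * u)) := by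
  have hba : b - a ≠ 0 := sub_ne_zero.mpr hab.symm
  subst hw
  field_simp
  ring

lemma lintegral_expMeasure (r : ℝ) (g : ℝ → ENNReal) :
    ∫⁻ x, g x ∂expMeasure r = ∫⁻ x in Ioi 0, ENNReal.ofReal (r * exp (-r * x)) * g x := by
  have hdensity : expMeasure r = volume.withDensity (exponentialPDF r) := rfl
  rw [hdensity, lintegral_withDensity_eq_lintegral_mul_non_measurable _ (f := exponentialPDF r)
    (measurable_exponentialPDFReal r).ennreal_ofReal (ae_of_all _ fun _ => ENNReal.ofReal_lt_top),
    ← setLIntegral_eq_of_support_subset (s := Ici 0), setLIntegral_congr Ioi_ae_eq_Ici.symm]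
  · refine setLIntegral_congr_fun measurableSet_Ioi fun x hx => ?_
    rw [Pi.mul_apply, exponentialPDF_of_nonneg (le_of_lt hx), neg_mul]
  · intro x hx
    by_contra hneg
    exact hx (by simp [exponentialPDF_of_neg (not_le.mp hneg)])

section

variable {Ω : Type*} [MeasurableSpace Ω] {P : Measure Ω}

lemma IsExpRV.map_eq_expMeasure [IsProbabilityMeasure P] {r : ℝ} {X : Ω → ℝ} (hr : 0 < r)
    (hX : IsExpRV P r X) : P.map X = expMeasure r := by
  have := isProbabilityMeasure_expMeasure hr
  have := Measure.isProbabilityMeasure_map (μ := P) hX.1.aemeasurable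
  have cdf_of_nonneg : ∀ x, 0 ≤ x → cdf (P.map X) x = 1 - exp (-(r * x)) := fun x hx => by
    rw [cdf_eq_real, ← compl_Ioi, probReal_compl_eq_one_sub measurableSet_Ioi, measureReal_def,
      Measure.map_apply hX.1 measurableSet_Ioi, ← neg_mul, show X ⁻¹' Ioi x = {ω | X ω > x} from rfl,
      hX.2 x hx, ENNReal.toReal_ofReal (exp_pos _).le]
  refine Measure.eq_of_cdf _ _ (StieltjesFunction.ext fun x => ?_)
  rw [cdf_expMeasure_eq hr]
  split_ifs with hx
  · exact cdf_of_nonneg x hx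
  · refine le_antisymm ?_ (cdf_nonneg _ x)
    calc cdf (P.map X) x ≤ cdf (P.map X) 0 := monotone_cdf _ (not_le.mp hx).le
      _ = 0 := by simp [cdf_of_nonneg 0 le_rfl]

lemma ProbabilityTheory.IndepFun.measure_sub_gt [IsFiniteMeasure P] {X Y : Ω → ℝ}
    (hX : Measurable X) (hY : Measurable Y) (hXY : IndepFun X Y P) (u : ℝ) :
    P {ω | Y ω - X ω > u} = ∫⁻ x, P {ω | Y ω > x + u} ∂P.map X := by
  have hS : MeasurableSet {p : ℝ × ℝ | p.2 - p.1 > u} :=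
    measurableSet_lt measurable_const (measurable_snd.sub measurable_fst)
  have hpair : {ω | Y ω - X ω > u} = (fun ω => (X ω, Y ω)) ⁻¹' {p | p.2 - p.1 > u} := rfl
  rw [hpair, ← Measure.map_apply (hX.prodMk hY) hS,
    hXY.map_prod_eq_prod_map_map hX.aemeasurable hY.aemeasurable, Measure.prod_apply hS]
  refine lintegral_congr fun x => ?_
  rw [Measure.map_apply hY (hS.preimage measurable_prodMk_left)]
  congr 1
  ext ω
  simp [lt_sub_iff_add_lt']

lemma IsExpRV.measure_sub_gt [IsProbabilityMeasure P] {r : ℝ} {X Y : Ω → ℝ} (hr : 0 < r)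
    (hX : IsExpRV P r X) (hY : Measurable Y) (hXY : IndepFun X Y P) (u : ℝ) :
    P {ω | Y ω - X ω > u} =
      ∫⁻ x in Ioi 0, ENNReal.ofReal (r * exp (-r * x)) * P {ω | Y ω > x + u} := by
  rw [hXY.measure_sub_gt hX.1 hY, hX.map_eq_expMeasure hr, lintegral_expMeasure]

lemma IsExpRV.measure_sub_gt_of_isHypoexpRV [IsProbabilityMeasure P] {r a b : ℝ}
    {X Y : Ω → ℝ} (hr : 0 < r) (ha : 0 < a) (hb : 0 < b) (hX : IsExpRV P r X)
    (hY : IsHypoexpRV P a b Y) (hXY : IndepFun X Y P) {u : ℝ} (hu : 0 ≤ u) :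
    P {ω | Y ω - X ω > u} = ENNReal.ofReal
      ((b * (r / (r + a) * exp (-a * u)) - a * (r / (r + b) * exp (-b * u))) / (b - a)) := by
  set f := fun x =>
    r * exp (-r * x) * ((b * exp (-a * (x + u)) - a * exp (-b * (x + u))) / (b - a))
  have hf : f = fun x => (b * (r * exp (-r * x) * exp (-a * (x + u)))
      - a * (r * exp (-r * x) * exp (-b * (x + u)))) / (b - a) := by
    ext x; ring
  have hint_a := integrableOn_mul_exp_mul_exp_add (r := r) (c := a) (by linarith) u
  have hint_b := integrableOn_mul_exp_mul_exp_add (r := r) (c := b) (by linarith) u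
  have hint : IntegrableOn f (Ioi 0) := by
    rw [hf]; exact ((hint_a.const_mul b).sub (hint_b.const_mul a)).div_const _
  have hnonneg : 0 ≤ᵐ[volume.restrict (Ioi 0)] f :=
    ae_restrict_of_forall_mem measurableSet_Ioi fun x (hx : 0 < x) =>
      mul_nonneg (by positivity) (hypoexp_survival_nonneg ha.le hb.le (by linarith))
  rw [hX.measure_sub_gt hr hY.1 hXY, setLIntegral_congr_fun measurableSet_Ioi
    (g := fun x => ENNReal.ofReal (f x)) fun x hx => ?_,
    ← ofReal_integral_eq_lintegral_ofReal hint hnonneg]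
  · rw [hf, integral_div, integral_sub (hint_a.const_mul b) (hint_b.const_mul a),
      integral_const_mul, integral_const_mul, integral_mul_exp_mul_exp_add (by linarith),
      integral_mul_exp_mul_exp_add (by linarith)]
  · rw [hY.2 _ (by linarith [mem_Ioi.mp hx]), ← ENNReal.ofReal_mul (by positivity)]

end

/-- Let `X ~ Exp(λ)` and `Y ~ Hypoexp(μ₁, μ₂)` be independent with `μ₁ ≠ μ₂`,
`Z = Y - X`, `Λ = {Y > X}`, and `w = μ₂(λ+μ₂)/((μ₂-μ₁)(λ+μ₁+μ₂))`. Then the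
conditional density of `Z` given `Λ` is
`f(z) = w μ₁ e^{-μ₁ z} + (1-w) μ₂ e^{-μ₂ z}` for `z > 0`. -/
theorem cond_density_diff_hypoexp_exp
    {Ω : Type*} [MeasurableSpace Ω] (P : Measure Ω) [IsProbabilityMeasure P]
    (lam μ₁ μ₂ : ℝ) (hlam : 0 < lam) (hμ₁ : 0 < μ₁) (hμ₂ : 0 < μ₂) (hne : μ₁ ≠ μ₂)
    (X Y : Ω → ℝ)
    (hX : IsExpRV P lam X) (hY : IsHypoexpRV P μ₁ μ₂ Y)
    (hindep : IndepFun X Y P)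
    (Z : Ω → ℝ) (hZ : Z = fun ω => Y ω - X ω)
    (Λ : Set Ω) (hΛ : Λ = {ω | Y ω > X ω})
    (w : ℝ) (hw : w = μ₂ * (lam + μ₂) / ((μ₂ - μ₁) * (lam + μ₁ + μ₂))) :
    ∀ s : ℝ, 0 ≤ s →
      (P[|Λ]) {ω | Z ω > s} =
        ENNReal.ofReal (∫ z in Set.Ioi s,
          (w * μ₁ * Real.exp (-μ₁ * z) + (1 - w) * μ₂ * Real.exp (-μ₂ * z))) := by
  intro s hs
  set c := lam * (lam + μ₁ + μ₂) / ((lam + μ₁) * (lam + μ₂))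
  have hsurv : ∀ u, 0 ≤ u → P {ω | Z ω > u} =
      ENNReal.ofReal (c * (w * exp (-μ₁ * u) + (1 - w) * exp (-μ₂ * u))) := fun u hu => by
    rw [hZ, hX.measure_sub_gt_of_isHypoexpRV hlam hμ₁ hμ₂ hY hindep hu,
      hypoexp_exp_survival_eq_mul_mixture hlam hμ₁ hμ₂ hne hw]
  have hΛZ : Λ = {ω | Z ω > 0} := by simp [hΛ, hZ]
  have hΛ_meas : MeasurableSet Λ := hΛ ▸ measurableSet_lt hX.1 hY.1
  have hsub : {ω | Z ω > s} ⊆ Λ := hΛZ ▸ fun ω (h : s < Z ω) => hs.trans_lt h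
  rw [cond_apply hΛ_meas, inter_eq_right.mpr hsub, hΛZ, hsurv s hs, hsurv 0 le_rfl,
    integral_Ioi_exp_mixture hμ₁ hμ₂]
  simp only [mul_zero, exp_zero, mul_one, add_sub_cancel]
  rw [ENNReal.ofReal_mul (by positivity), ← mul_assoc,
    ENNReal.inv_mul_cancel (by positivity) ENNReal.ofReal_ne_top, one_mul]
end

section
/- Let X ~ Exp(λ) and Y ~ Hypoexp(μ₁, μ₂) be independent with μ₁ ≠ μ₂, Z = Y − X, Λ = {Y > X}, and w = μ₂(λ+μ₂)/((μ₂−μ₁)(λ+μ₁+μ₂)). Then the conditional joint density of (Z, X) given Λ is f(z,x) = w·μ₁e^{−μ₁z}·(λ+μ₁)e^{−(λ+μ₁)x} + (1−w)·μ₂e^{−μ₂z}·(λ+μ₂)e^{−(λ+μ₂)x} for z, x > 0; in particular Z and X are not conditionally independent given Λ (since this joint density differs from the product of the conditional marginals). -/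
open MeasureTheory ProbabilityTheory Real

/-!
Conditioning on `X`, independence gives
`P(Y - X > s, X > x₀) = ∫_{x₀}^∞ λ e^{-λx} P(Y > s + x) dx`, and with the hypoexponential tail
the integrand is a combination of the exponentials `e^{-(λ+μ₁)x}` and `e^{-(λ+μ₂)x}`. The
integral equals `P(Λ) · R(s, x₀)` with the mixture tail
`R(s, x) = w e^{-μ₁ s} e^{-(λ+μ₁) x} + (1 - w) e^{-μ₂ s} e^{-(λ+μ₂) x}` and `R(0, 0) = 1`, so
`R` is the conditional joint tail of `(Z, X)` given `Λ`, and it is the double integral of the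
stated density. Conditional independence would force `R(s, x) = R(s, 0) R(0, x)`, but
`R(s, 0) R(0, x) - R(s, x) = -w (1 - w) (e^{-μ₁ s} - e^{-μ₂ s}) (e^{-(λ+μ₁) x} - e^{-(λ+μ₂) x})`
is positive for `s, x > 0`: `w (1 - w) < 0`, and both differences have the sign of `μ₂ - μ₁`.
-/

open Set Filter

noncomputable def hypoexpTail (a b t : ℝ) : ℝ := (b * exp (-a * t) - a * exp (-b * t)) / (b - a)

noncomputable def condTail (lam μ₁ μ₂ w s x : ℝ) : ℝ :=
  w * exp (-μ₁ * s) * exp (-(lam + μ₁) * x) + (1 - w) * exp (-μ₂ * s) * exp (-(lam + μ₂) * x)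

lemma integral_exp_neg_mul_Ioi {c : ℝ} (hc : 0 < c) (a : ℝ) :
    ∫ x in Ioi a, exp (-c * x) = exp (-c * a) / c := by
  rw [integral_exp_mul_Ioi (neg_neg_iff_pos.2 hc), div_neg, neg_div, neg_neg]

lemma integral_integral_mix_exp {α β γ δ : ℝ} (hα : 0 < α) (hβ : 0 < β) (hγ : 0 < γ)
    (hδ : 0 < δ) (w s x₀ : ℝ) :
    ∫ z in Ioi s, ∫ x in Ioi x₀,
      (w * α * exp (-α * z) * γ * exp (-γ * x) + (1 - w) * β * exp (-β * z) * δ * exp (-δ * x))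
      = w * exp (-α * s) * exp (-γ * x₀) + (1 - w) * exp (-β * s) * exp (-δ * x₀) := by
  have inner : ∀ z, ∫ x in Ioi x₀,
      (w * α * exp (-α * z) * γ * exp (-γ * x) + (1 - w) * β * exp (-β * z) * δ * exp (-δ * x))
      = (w * γ * exp (-γ * x₀) / γ * α) * exp (-α * z)
        + ((1 - w) * δ * exp (-δ * x₀) / δ * β) * exp (-β * z) := by
    intro z
    rw [integral_add ((exp_neg_integrableOn_Ioi x₀ hγ).const_mul _)
      ((exp_neg_integrableOn_Ioi x₀ hδ).const_mul _), integral_const_mul, integral_const_mul,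
      integral_exp_neg_mul_Ioi hγ, integral_exp_neg_mul_Ioi hδ]
    ring
  simp_rw [inner]
  rw [integral_add ((exp_neg_integrableOn_Ioi s hα).const_mul _)
    ((exp_neg_integrableOn_Ioi s hβ).const_mul _), integral_const_mul, integral_const_mul,
    integral_exp_neg_mul_Ioi hα, integral_exp_neg_mul_Ioi hβ]
  field_simp

lemma hypoexpTail_nonneg {a b t : ℝ} (ha : 0 ≤ a) (ht : 0 ≤ t) : 0 ≤ hypoexpTail a b t := by
  unfold hypoexpTail
  rcases lt_trichotomy a b with hab | rfl | hab
  · have : exp (-b * t) ≤ exp (-a * t) := exp_le_exp.2 (by nlinarith)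
    exact div_nonneg (by nlinarith [exp_pos (-a * t)]) (sub_nonneg.2 hab.le)
  · simp
  · have : exp (-a * t) ≤ exp (-b * t) := exp_le_exp.2 (by nlinarith)
    exact div_nonneg_of_nonpos (by nlinarith [exp_pos (-a * t)]) (sub_nonpos.2 hab.le)

lemma mul_exp_mul_hypoexpTail_add (lam μ₁ μ₂ s : ℝ) :
    (fun x => lam * exp (-(lam * x)) * hypoexpTail μ₁ μ₂ (s + x)) = fun x =>
      lam * μ₂ * exp (-μ₁ * s) / (μ₂ - μ₁) * exp (-(lam + μ₁) * x)
        - lam * μ₁ * exp (-μ₂ * s) / (μ₂ - μ₁) * exp (-(lam + μ₂) * x) := by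
  ext x
  have split : ∀ u v : ℝ, exp (-(u + v) * x) = exp (-(u * x)) * exp (-v * x) := fun u v => by
    rw [← exp_add]; ring_nf
  rw [hypoexpTail, split, split, mul_add, exp_add, mul_add, exp_add]
  ring_nf

lemma integrableOn_mul_exp_mul_hypoexpTail_add {lam μ₁ μ₂ : ℝ} (h₁ : 0 < lam + μ₁)
    (h₂ : 0 < lam + μ₂) (s x₀ : ℝ) :
    IntegrableOn (fun x => lam * exp (-(lam * x)) * hypoexpTail μ₁ μ₂ (s + x)) (Ioi x₀) := by
  rw [mul_exp_mul_hypoexpTail_add]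
  exact ((exp_neg_integrableOn_Ioi x₀ h₁).const_mul _).sub
    ((exp_neg_integrableOn_Ioi x₀ h₂).const_mul _)

lemma integral_mul_exp_mul_hypoexpTail_add {lam μ₁ μ₂ w : ℝ} (hlam : 0 < lam) (hμ₁ : 0 < μ₁)
    (hμ₂ : 0 < μ₂) (hne : μ₁ ≠ μ₂) (hw : w = μ₂ * (lam + μ₂) / ((μ₂ - μ₁) * (lam + μ₁ + μ₂)))
    (s x₀ : ℝ) :
    ∫ x in Ioi x₀, lam * exp (-(lam * x)) * hypoexpTail μ₁ μ₂ (s + x)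
      = lam * (lam + μ₁ + μ₂) / ((lam + μ₁) * (lam + μ₂)) * condTail lam μ₁ μ₂ w s x₀ := by
  have h₁ : 0 < lam + μ₁ := by positivity
  have h₂ : 0 < lam + μ₂ := by positivity
  have hsub : μ₂ - μ₁ ≠ 0 := sub_ne_zero.2 hne.symm
  rw [mul_exp_mul_hypoexpTail_add, integral_sub ((exp_neg_integrableOn_Ioi x₀ h₁).const_mul _)
    ((exp_neg_integrableOn_Ioi x₀ h₂).const_mul _), integral_const_mul, integral_const_mul,
    integral_exp_neg_mul_Ioi h₁, integral_exp_neg_mul_Ioi h₂, condTail, hw]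
  field_simp
  ring

lemma condTail_nonneg {lam μ₁ μ₂ w : ℝ} (hlam : 0 < lam) (hμ₁ : 0 < μ₁) (hμ₂ : 0 < μ₂)
    (hne : μ₁ ≠ μ₂) (hw : w = μ₂ * (lam + μ₂) / ((μ₂ - μ₁) * (lam + μ₁ + μ₂))) {s x₀ : ℝ}
    (hs : 0 ≤ s) (hx₀ : 0 ≤ x₀) : 0 ≤ condTail lam μ₁ μ₂ w s x₀ := by
  have hint : 0 ≤ ∫ x in Ioi x₀, lam * exp (-(lam * x)) * hypoexpTail μ₁ μ₂ (s + x) :=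
    setIntegral_nonneg measurableSet_Ioi fun x hx =>
      mul_nonneg (by positivity) (hypoexpTail_nonneg hμ₁.le (by linarith [mem_Ioi.1 hx]))
  rw [integral_mul_exp_mul_hypoexpTail_add hlam hμ₁ hμ₂ hne hw] at hint
  exact nonneg_of_mul_nonneg_right hint (by positivity)

lemma condTail_lt_mul {lam μ₁ μ₂ w : ℝ} (hlam : 0 < lam) (hμ₁ : 0 < μ₁) (hμ₂ : 0 < μ₂)
    (hne : μ₁ ≠ μ₂) (hw : w = μ₂ * (lam + μ₂) / ((μ₂ - μ₁) * (lam + μ₁ + μ₂))) {s x : ℝ}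
    (hs : 0 < s) (hx : 0 < x) :
    condTail lam μ₁ μ₂ w s x < condTail lam μ₁ μ₂ w s 0 * condTail lam μ₁ μ₂ w 0 x := by
  have hsub : μ₂ - μ₁ ≠ 0 := sub_ne_zero.2 hne.symm
  have hw_mul : w * (1 - w)
      = -(μ₁ * μ₂ * (lam + μ₁) * (lam + μ₂) / ((μ₂ - μ₁) * (lam + μ₁ + μ₂)) ^ 2) := by
    rw [hw]
    field_simp
    ring
  have hw_neg : w * (1 - w) < 0 := by
    rw [hw_mul, neg_neg_iff_pos]
    exact div_pos (by positivity) (pow_two_pos_of_ne_zero (mul_ne_zero hsub (by positivity)))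
  have hdiff : 0 < (exp (-μ₁ * s) - exp (-μ₂ * s))
      * (exp (-(lam + μ₁) * x) - exp (-(lam + μ₂) * x)) := by
    rcases hne.lt_or_gt with h | h
    · exact mul_pos (sub_pos.2 (exp_lt_exp.2 (by nlinarith)))
        (sub_pos.2 (exp_lt_exp.2 (by nlinarith)))
    · exact mul_pos_of_neg_of_neg (sub_neg.2 (exp_lt_exp.2 (by nlinarith)))
        (sub_neg.2 (exp_lt_exp.2 (by nlinarith)))
  have hdefect : condTail lam μ₁ μ₂ w s 0 * condTail lam μ₁ μ₂ w 0 x - condTail lam μ₁ μ₂ w s x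
      = -(w * (1 - w)) * ((exp (-μ₁ * s) - exp (-μ₂ * s))
          * (exp (-(lam + μ₁) * x) - exp (-(lam + μ₂) * x))) := by
    simp only [condTail, mul_zero, exp_zero]
    ring
  nlinarith

section
variable {Ω : Type*} [MeasurableSpace Ω] {P : Measure Ω} [IsProbabilityMeasure P]

lemma IsExpRV.ae_pos {r : ℝ} {X : Ω → ℝ} (hX : IsExpRV P r X) : ∀ᵐ ω ∂P, 0 < X ω :=
  ae_iff.2 <| (prob_compl_eq_zero_iff (hX.1 measurableSet_Ioi)).2
    (by simpa using hX.2 0 le_rfl : P {ω | X ω > 0} = 1)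

lemma IsExpRV.map_eq {r : ℝ} (hr : 0 < r) {X : Ω → ℝ} (hX : IsExpRV P r X) :
    P.map X = expMeasure r := by
  have := isProbabilityMeasure_expMeasure hr
  have := Measure.isProbabilityMeasure_map (μ := P) hX.1.aemeasurable
  refine Measure.ext_of_Iic _ _ fun t => ?_
  rw [show expMeasure r = volume.withDensity (exponentialPDF r) from rfl,
    Measure.map_apply hX.1 measurableSet_Iic, withDensity_apply _ measurableSet_Iic,
    lintegral_exponentialPDF_eq_antiDeriv hr]
  split_ifs with ht
  · rw [← compl_Ioi, preimage_compl, prob_compl_eq_one_sub (hX.1 measurableSet_Ioi),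
      ENNReal.ofReal_sub _ (exp_pos _).le, ENNReal.ofReal_one, ← neg_mul, ← hX.2 t ht]
    rfl
  · rw [ENNReal.ofReal_zero]
    refine measure_mono_null (fun ω (hω : X ω ≤ t) => ?_) (ae_iff.1 hX.ae_pos)
    exact (hω.trans (not_le.1 ht).le).not_gt

lemma measure_sub_gt_and_gt_eq_lintegral {X Y : Ω → ℝ} (hXm : Measurable X)
    (hYm : Measurable Y) (hindep : IndepFun X Y P) (s x₀ : ℝ) :
    P {ω | Y ω - X ω > s ∧ X ω > x₀} = ∫⁻ x in Ioi x₀, P {ω | Y ω > s + x} ∂(P.map X) := by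
  set S : Set (ℝ × ℝ) := {p | p.2 - p.1 > s ∧ p.1 > x₀}
  have hS : MeasurableSet S :=
    (measurableSet_lt measurable_const (measurable_snd.sub measurable_fst)).inter
      (measurableSet_lt measurable_const measurable_fst)
  have hsec : ∀ x, (P.map Y) (Prod.mk x ⁻¹' S)
      = (Ioi x₀).indicator (fun x => P {ω | Y ω > s + x}) x := by
    intro x
    by_cases hx : x₀ < x
    · rw [indicator_of_mem (mem_Ioi.2 hx), Measure.map_apply hYm (measurable_prodMk_left hS)]
      congr 1
      ext ω
      simp [S, hx, lt_sub_iff_add_lt]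
    · rw [indicator_of_notMem (show x ∉ Ioi x₀ from hx)]
      convert measure_empty (μ := P.map Y)
      ext y
      simp [S, hx]
  rw [show {ω | Y ω - X ω > s ∧ X ω > x₀} = (fun ω => (X ω, Y ω)) ⁻¹' S from rfl,
    ← Measure.map_apply (hXm.prodMk hYm) hS,
    (indepFun_iff_map_prod_eq_prod_map_map hXm.aemeasurable hYm.aemeasurable).1 hindep,
    Measure.prod_apply hS, lintegral_congr hsec, lintegral_indicator measurableSet_Ioi]

variable {lam μ₁ μ₂ w : ℝ} {X Y : Ω → ℝ}

lemma measure_sub_gt_and_gt (hlam : 0 < lam) (hμ₁ : 0 < μ₁) (hμ₂ : 0 < μ₂) (hne : μ₁ ≠ μ₂)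
    (hX : IsExpRV P lam X) (hY : IsHypoexpRV P μ₁ μ₂ Y) (hindep : IndepFun X Y P)
    (hw : w = μ₂ * (lam + μ₂) / ((μ₂ - μ₁) * (lam + μ₁ + μ₂))) {s x₀ : ℝ} (hs : 0 ≤ s)
    (hx₀ : 0 ≤ x₀) :
    P {ω | Y ω - X ω > s ∧ X ω > x₀} = ENNReal.ofReal
      (lam * (lam + μ₁ + μ₂) / ((lam + μ₁) * (lam + μ₂)) * condTail lam μ₁ μ₂ w s x₀) := by
  have hpdf : Measurable (exponentialPDF lam) := (measurable_exponentialPDFReal lam).ennreal_ofReal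
  have htail : Measurable fun x => P {ω | Y ω > s + x} :=
    Antitone.measurable fun a b hab => measure_mono fun ω (hω : s + b < Y ω) =>
      (show s + a < Y ω by linarith)
  have hpt : ∀ x ∈ Ioi x₀, (exponentialPDF lam * fun x => P {ω | Y ω > s + x}) x
      = ENNReal.ofReal (lam * exp (-(lam * x)) * hypoexpTail μ₁ μ₂ (s + x)) := fun x hx => by
    have hx : 0 ≤ x := hx₀.trans (le_of_lt hx)
    rw [Pi.mul_apply, exponentialPDF_of_nonneg hx, hY.2 _ (by positivity),
      ← ENNReal.ofReal_mul (by positivity), hypoexpTail]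
  rw [measure_sub_gt_and_gt_eq_lintegral hX.1 hY.1 hindep, hX.map_eq hlam,
    show expMeasure lam = volume.withDensity (exponentialPDF lam) from rfl,
    setLIntegral_withDensity_eq_setLIntegral_mul _ hpdf htail measurableSet_Ioi,
    setLIntegral_congr_fun measurableSet_Ioi hpt,
    ← integral_mul_exp_mul_hypoexpTail_add hlam hμ₁ hμ₂ hne hw,
    ofReal_integral_eq_lintegral_ofReal
      (integrableOn_mul_exp_mul_hypoexpTail_add (by positivity) (by positivity) s x₀)]
  refine (ae_restrict_iff' measurableSet_Ioi).2 (ae_of_all _ fun x hx => ?_)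
  exact mul_nonneg (by positivity) (hypoexpTail_nonneg hμ₁.le (by linarith [mem_Ioi.1 hx]))

lemma cond_sub_gt_and_gt (hlam : 0 < lam) (hμ₁ : 0 < μ₁) (hμ₂ : 0 < μ₂) (hne : μ₁ ≠ μ₂)
    (hX : IsExpRV P lam X) (hY : IsHypoexpRV P μ₁ μ₂ Y) (hindep : IndepFun X Y P)
    (hw : w = μ₂ * (lam + μ₂) / ((μ₂ - μ₁) * (lam + μ₁ + μ₂))) {s x₀ : ℝ} (hs : 0 ≤ s)
    (hx₀ : 0 ≤ x₀) :
    P[{ω | Y ω - X ω > s ∧ X ω > x₀} | {ω | Y ω > X ω}]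
      = ENNReal.ofReal (condTail lam μ₁ μ₂ w s x₀) := by
  have hρ : 0 < lam * (lam + μ₁ + μ₂) / ((lam + μ₁) * (lam + μ₂)) := by positivity
  have hΛ : P {ω | Y ω > X ω}
      = ENNReal.ofReal (lam * (lam + μ₁ + μ₂) / ((lam + μ₁) * (lam + μ₂))) := by
    have hae : {ω | Y ω > X ω} =ᵐ[P] {ω | Y ω - X ω > 0 ∧ X ω > 0} := by
      filter_upwards [hX.ae_pos] with ω hω
      exact propext ⟨fun h => ⟨sub_pos.2 h, hω⟩, fun h => sub_pos.1 h.1⟩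
    rw [measure_congr hae, measure_sub_gt_and_gt hlam hμ₁ hμ₂ hne hX hY hindep hw le_rfl le_rfl]
    simp [condTail]
  have hsub : {ω | Y ω - X ω > s ∧ X ω > x₀} ⊆ {ω | Y ω > X ω} := fun ω hω =>
    sub_pos.1 (hs.trans_lt hω.1)
  rw [cond_apply (measurableSet_lt hX.1 hY.1), inter_eq_self_of_subset_right hsub,
    measure_sub_gt_and_gt hlam hμ₁ hμ₂ hne hX hY hindep hw hs hx₀, hΛ, ENNReal.ofReal_mul hρ.le,
    ← mul_assoc, ENNReal.inv_mul_cancel (ENNReal.ofReal_pos.2 hρ).ne' ENNReal.ofReal_ne_top,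
    one_mul]

lemma not_indepFun_sub_cond (hlam : 0 < lam) (hμ₁ : 0 < μ₁) (hμ₂ : 0 < μ₂) (hne : μ₁ ≠ μ₂)
    (hX : IsExpRV P lam X) (hY : IsHypoexpRV P μ₁ μ₂ Y) (hindep : IndepFun X Y P)
    (hw : w = μ₂ * (lam + μ₂) / ((μ₂ - μ₁) * (lam + μ₁ + μ₂))) :
    ¬ IndepFun (fun ω => Y ω - X ω) X P[|{ω | Y ω > X ω}] := by
  intro hI
  have hcond {s x₀ : ℝ} (hs : 0 ≤ s) (hx₀ : 0 ≤ x₀) :=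
    cond_sub_gt_and_gt hlam hμ₁ hμ₂ hne hX hY hindep hw hs hx₀
  have hXpos : ∀ᵐ ω ∂P[|{ω | Y ω > X ω}], 0 < X ω :=
    cond_absolutelyContinuous.ae_le hX.ae_pos
  have hZ₁ : P[{ω | Y ω - X ω > 1} | {ω | Y ω > X ω}]
      = ENNReal.ofReal (condTail lam μ₁ μ₂ w 1 0) := by
    rw [← hcond zero_le_one le_rfl]
    refine measure_congr ?_
    filter_upwards [hXpos] with ω hω
    exact propext ⟨fun h => ⟨h, hω⟩, And.left⟩
  have hX₁ : P[{ω | X ω > 1} | {ω | Y ω > X ω}]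
      = ENNReal.ofReal (condTail lam μ₁ μ₂ w 0 1) := by
    rw [← hcond le_rfl zero_le_one, ← cond_inter_self (measurableSet_lt hX.1 hY.1)]
    congr 1
    ext ω
    simp [sub_pos]
  have hprod := indepFun_iff_measure_inter_preimage_eq_mul.1 hI (Ioi 1) (Ioi 1)
    measurableSet_Ioi measurableSet_Ioi
  change P[{ω | Y ω - X ω > 1 ∧ X ω > 1} | {ω | Y ω > X ω}]
    = P[{ω | Y ω - X ω > 1} | {ω | Y ω > X ω}] * P[{ω | X ω > 1} | {ω | Y ω > X ω}] at hprod
  have hlt := condTail_lt_mul hlam hμ₁ hμ₂ hne hw one_pos one_pos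
  have h₁₁ := condTail_nonneg hlam hμ₁ hμ₂ hne hw zero_le_one zero_le_one
  rw [hcond zero_le_one zero_le_one, hZ₁, hX₁,
    ← ENNReal.ofReal_mul (condTail_nonneg hlam hμ₁ hμ₂ hne hw zero_le_one le_rfl),
    ENNReal.ofReal_eq_ofReal_iff h₁₁ (h₁₁.trans hlt.le)] at hprod
  exact hlt.ne hprod

end

/-- Let `X ~ Exp(λ)` and `Y ~ Hypoexp(μ₁, μ₂)` be independent with `μ₁ ≠ μ₂`,
`Z = Y - X`, `Λ = {Y > X}`, and `w = μ₂(λ+μ₂)/((μ₂-μ₁)(λ+μ₁+μ₂))`. Then the conditional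
joint density of `(Z, X)` given `Λ` is
`f(z,x) = w μ₁ e^{-μ₁ z} (λ+μ₁) e^{-(λ+μ₁)x} + (1-w) μ₂ e^{-μ₂ z} (λ+μ₂) e^{-(λ+μ₂)x}`
for `z, x > 0`; and `Z` and `X` are not conditionally independent given `Λ`. -/
theorem cond_joint_density_and_dependence
    {Ω : Type*} [MeasurableSpace Ω] (P : Measure Ω) [IsProbabilityMeasure P]
    (lam μ₁ μ₂ : ℝ) (hlam : 0 < lam) (hμ₁ : 0 < μ₁) (hμ₂ : 0 < μ₂) (hne : μ₁ ≠ μ₂)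
    (X Y : Ω → ℝ)
    (hX : IsExpRV P lam X) (hY : IsHypoexpRV P μ₁ μ₂ Y)
    (hindep : IndepFun X Y P)
    (Z : Ω → ℝ) (hZ : Z = fun ω => Y ω - X ω)
    (Λ : Set Ω) (hΛ : Λ = {ω | Y ω > X ω})
    (w : ℝ) (hw : w = μ₂ * (lam + μ₂) / ((μ₂ - μ₁) * (lam + μ₁ + μ₂))) :
    (∀ s x₀ : ℝ, 0 ≤ s → 0 ≤ x₀ →
      (P[|Λ]) {ω | Z ω > s ∧ X ω > x₀} =
        ENNReal.ofReal (∫ z in Set.Ioi s, ∫ x in Set.Ioi x₀,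
          (w * μ₁ * Real.exp (-μ₁ * z) * (lam + μ₁) * Real.exp (-(lam + μ₁) * x) +
            (1 - w) * μ₂ * Real.exp (-μ₂ * z) * (lam + μ₂) * Real.exp (-(lam + μ₂) * x))))
    ∧ ¬ IndepFun Z X (P[|Λ]) := by
  subst hZ hΛ
  refine ⟨fun s x₀ hs hx₀ => ?_, not_indepFun_sub_cond hlam hμ₁ hμ₂ hne hX hY hindep hw⟩
  rw [integral_integral_mix_exp hμ₁ hμ₂ (by positivity) (by positivity)]
  exact cond_sub_gt_and_gt hlam hμ₁ hμ₂ hne hX hY hindep hw hs hx₀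
end

section
/- Let X be hypoexponential with parameters (λ, γ) (sum of independent Exp(λ) and Exp(γ)), let S ~ Exp(μ), and let σ ∈ (0,1) satisfy σ = (λ/(λ+μ−μσ))(γ/(γ+μ−μσ)). Define Y to equal S with probability σ and S + X^R with probability 1−σ, where X^R has density f(t) = wλe^{−λt} + (1−w)γe^{−γt} with w = γ(γ+μ−μσ)/((γ−λ)(λ+γ+μ−μσ)), all components independent. Then E[Y] = 1/λ + 1/γ and E[Y²] = 2(1/γ² + 1/λ² + (1+σ)/(λγ)). -/
/-!
Write `Z = 1_{Λᶜ} X^R`, so `Y = S + Z`. Independence of `S`, `X^R` and `1_Λ` gives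
`E[Z^k] = (1 - σ) E[(X^R)^k]` and `E[Y²] = E[S²] + 2 E[S] E[Z] + E[Z²]`. The moments of `S` and
`X^R` come from the layer-cake formula `E[f^p] = p ∫₀^∞ t^(p-1) P(f > t) dt`, since both tails are
combinations of exponentials. What remains is a rational identity in `λ, γ, μ, σ`; it holds
modulo the quadratic `μ²σ² - μ²σ - (λ+γ)μσ + λγ = 0`, to which the fixed-point equation for `σ`
reduces after cancelling the root `σ = 1`.
-/

open MeasureTheory ProbabilityTheory Real

open Set

theorem integral_rpow_sub_one_mul_exp_neg_mul_Ioi {p a : ℝ} (hp : 0 < p) (ha : 0 < a) :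
    ∫ t in Ioi 0, t ^ (p - 1) * exp (-a * t) = Gamma p / a ^ p := by
  simp_rw [neg_mul, integral_rpow_mul_exp_neg_mul_Ioi hp ha, div_rpow zero_le_one ha.le, one_rpow,
    one_div_mul_eq_div]

theorem integrableOn_rpow_sub_one_mul_exp_neg_mul_Ioi {p a : ℝ} (hp : 0 < p) (ha : 0 < a) :
    IntegrableOn (fun t => t ^ (p - 1) * exp (-a * t)) (Ioi 0) :=
  Integrable.of_integral_ne_zero <| by
    rw [integral_rpow_sub_one_mul_exp_neg_mul_Ioi hp ha]
    exact (div_pos (Gamma_pos_of_pos hp) (rpow_pos_of_pos ha p)).ne'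

theorem integral_Ioi_exp_mix_density {a b : ℝ} (ha : 0 < a) (hb : 0 < b) (c₁ c₂ t : ℝ) :
    ∫ s in Ioi t, (c₁ * a * exp (-a * s) + c₂ * b * exp (-b * s)) =
      c₁ * exp (-a * t) + c₂ * exp (-b * t) := by
  rw [integral_add ((exp_neg_integrableOn_Ioi t ha).const_mul _)
    ((exp_neg_integrableOn_Ioi t hb).const_mul _), integral_const_mul, integral_const_mul,
    integral_exp_mul_Ioi (neg_neg_of_pos ha), integral_exp_mul_Ioi (neg_neg_of_pos hb)]
  field_simp

theorem exp_mix_nonneg {a b c t : ℝ} (hc : 0 < c * (b - a)) (ht : 0 ≤ t) :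
    0 ≤ c * exp (-a * t) + (1 - c) * exp (-b * t) := by
  rcases lt_or_gt_of_ne (sub_ne_zero.mp (right_ne_zero_of_mul hc.ne')).symm with hab | hab
  · have hc0 : 0 < c := pos_of_mul_pos_left hc (sub_pos.mpr hab).le
    have hexp : exp (-b * t) ≤ exp (-a * t) := exp_le_exp.mpr (by nlinarith)
    nlinarith [exp_pos (-b * t)]
  · have hc0 : c < 0 := neg_of_mul_pos_left hc (sub_neg.mpr hab).le
    have hexp : exp (-a * t) ≤ exp (-b * t) := exp_le_exp.mpr (by nlinarith)
    nlinarith [exp_pos (-a * t)]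

theorem indicator_compl_eq_mul_one_sub_indicator_one {Ω : Type*} (Λ : Set Ω) (X : Ω → ℝ) :
    Λᶜ.indicator X = fun ω => X ω * (1 - Λ.indicator (1 : Ω → ℝ) ω) := by
  ext ω
  by_cases hω : ω ∈ Λ <;> simp [hω]

section Moments

variable {Ω : Type*} [MeasurableSpace Ω] {P : Measure Ω}

theorem integrable_and_integral_eq_of_lintegral_eq_ofReal {f : Ω → ℝ} (hf : 0 ≤ᵐ[P] f)
    (hfm : AEStronglyMeasurable f P) {c : ℝ} (hc : 0 ≤ c)
    (h : ∫⁻ ω, ENNReal.ofReal (f ω) ∂P = ENNReal.ofReal c) :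
    Integrable f P ∧ ∫ ω, f ω ∂P = c := by
  refine ⟨⟨hfm, ?_⟩, ?_⟩
  · rw [hasFiniteIntegral_iff_ofReal hf, h]
    exact ENNReal.ofReal_lt_top
  · rw [integral_eq_lintegral_of_nonneg_ae hf hfm, h, ENNReal.toReal_ofReal hc]

theorem integral_rpow_eq_of_tail {f : Ω → ℝ} (hf : 0 ≤ᵐ[P] f) (hfm : AEMeasurable f P)
    {G : ℝ → ℝ} (hG : ∀ t, 0 < t → 0 ≤ G t)
    (htail : ∀ t, 0 < t → P {ω | t < f ω} = ENNReal.ofReal (G t))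
    {p : ℝ} (hp : 0 < p) (hint : IntegrableOn (fun t => t ^ (p - 1) * G t) (Ioi 0)) :
    Integrable (fun ω => f ω ^ p) P ∧
      ∫ ω, f ω ^ p ∂P = p * ∫ t in Ioi 0, t ^ (p - 1) * G t := by
  have hnn : ∀ t ∈ Ioi (0 : ℝ), 0 ≤ t ^ (p - 1) * G t := fun t ht =>
    mul_nonneg (rpow_nonneg (le_of_lt ht) _) (hG t ht)
  refine integrable_and_integral_eq_of_lintegral_eq_ofReal
    (hf.mono fun ω h => rpow_nonneg h p) (hfm.pow_const p).aestronglyMeasurable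
    (mul_nonneg hp.le (setIntegral_nonneg measurableSet_Ioi hnn)) ?_
  rw [lintegral_rpow_eq_lintegral_meas_lt_mul P hf hfm hp, ENNReal.ofReal_mul hp.le,
    ofReal_integral_eq_lintegral_ofReal hint
      ((ae_restrict_iff' measurableSet_Ioi).mpr (ae_of_all _ hnn))]
  congr 1
  refine setLIntegral_congr_fun measurableSet_Ioi fun t ht => ?_
  rw [htail t ht, mul_comm, ENNReal.ofReal_mul (rpow_nonneg (le_of_lt ht) _)]

theorem ae_nonneg_of_measure_pos_eq_one [IsProbabilityMeasure P] {f : Ω → ℝ}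
    (hf : Measurable f) (h : P {ω | 0 < f ω} = 1) : 0 ≤ᵐ[P] f := by
  have hpos : ∀ᵐ ω ∂P, 0 < f ω := by
    rw [ae_iff_measure_eq (measurableSet_lt measurable_const hf).nullMeasurableSet, h,
      measure_univ]
  exact hpos.mono fun ω h => h.le

theorem integral_rpow_of_tail_eq_exp_mix [IsProbabilityMeasure P] {f : Ω → ℝ}
    (hf : Measurable f) {a b c₁ c₂ : ℝ} (ha : 0 < a) (hb : 0 < b) (hc : c₁ + c₂ = 1)
    (hnn : ∀ t, 0 ≤ t → 0 ≤ c₁ * exp (-a * t) + c₂ * exp (-b * t))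
    (htail : ∀ t, 0 ≤ t →
      P {ω | t < f ω} = ENNReal.ofReal (c₁ * exp (-a * t) + c₂ * exp (-b * t)))
    {p : ℝ} (hp : 0 < p) :
    Integrable (fun ω => f ω ^ p) P ∧
      ∫ ω, f ω ^ p ∂P = Gamma (p + 1) * (c₁ / a ^ p + c₂ / b ^ p) := by
  have hf0 : 0 ≤ᵐ[P] f := ae_nonneg_of_measure_pos_eq_one hf (by simp [htail 0 le_rfl, hc])
  have hIa := integrableOn_rpow_sub_one_mul_exp_neg_mul_Ioi hp ha
  have hIb := integrableOn_rpow_sub_one_mul_exp_neg_mul_Ioi hp hb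
  have hmix : (fun t => t ^ (p - 1) * (c₁ * exp (-a * t) + c₂ * exp (-b * t))) =
      fun t => c₁ * (t ^ (p - 1) * exp (-a * t)) + c₂ * (t ^ (p - 1) * exp (-b * t)) := by
    ext t; ring
  obtain ⟨hint, heq⟩ := integral_rpow_eq_of_tail hf0 hf.aemeasurable
    (fun t ht => hnn t ht.le) (fun t ht => htail t ht.le) hp
    (by rw [hmix]; exact (hIa.const_mul c₁).add (hIb.const_mul c₂))
  refine ⟨hint, ?_⟩
  rw [heq, hmix, integral_add (hIa.const_mul c₁) (hIb.const_mul c₂), integral_const_mul,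
    integral_const_mul, integral_rpow_sub_one_mul_exp_neg_mul_Ioi hp ha,
    integral_rpow_sub_one_mul_exp_neg_mul_Ioi hp hb, Gamma_add_one hp.ne']
  ring

theorem integral_and_integral_sq_of_tail_eq_exp_mix [IsProbabilityMeasure P] {f : Ω → ℝ}
    (hf : Measurable f) {a b c₁ c₂ : ℝ} (ha : 0 < a) (hb : 0 < b) (hc : c₁ + c₂ = 1)
    (hnn : ∀ t, 0 ≤ t → 0 ≤ c₁ * exp (-a * t) + c₂ * exp (-b * t))
    (htail : ∀ t, 0 ≤ t →
      P {ω | t < f ω} = ENNReal.ofReal (c₁ * exp (-a * t) + c₂ * exp (-b * t))) :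
    (Integrable f P ∧ ∫ ω, f ω ∂P = c₁ / a + c₂ / b) ∧
      (Integrable (fun ω => f ω ^ 2) P ∧ ∫ ω, f ω ^ 2 ∂P = 2 * (c₁ / a ^ 2 + c₂ / b ^ 2)) := by
  have h1 := integral_rpow_of_tail_eq_exp_mix hf ha hb hc hnn htail one_pos
  have h2 := integral_rpow_of_tail_eq_exp_mix hf ha hb hc hnn htail two_pos
  have hΓ1 : Gamma (1 + 1) = 1 := by simpa using Gamma_nat_eq_factorial 1
  have hΓ2 : Gamma (2 + 1) = 2 := by simpa using Gamma_nat_eq_factorial 2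
  simp only [rpow_one, rpow_two, hΓ1, hΓ2, one_mul] at h1 h2
  exact ⟨h1, h2⟩

theorem IsExpRV.integral_and_integral_sq [IsProbabilityMeasure P] {r : ℝ} {X : Ω → ℝ}
    (hX : IsExpRV P r X) (hr : 0 < r) :
    (Integrable X P ∧ ∫ ω, X ω ∂P = 1 / r) ∧
      (Integrable (fun ω => X ω ^ 2) P ∧ ∫ ω, X ω ^ 2 ∂P = 2 / r ^ 2) := by
  have h := integral_and_integral_sq_of_tail_eq_exp_mix hX.1 hr hr (add_zero 1)
    (fun t _ => by positivity) (fun t ht => by simpa using hX.2 t ht)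
  simpa [div_eq_mul_inv] using h

theorem integral_indicator_compl_of_indepFun [IsProbabilityMeasure P] {X : Ω → ℝ} {Λ : Set Ω}
    (hΛ : MeasurableSet Λ) (hX : AEStronglyMeasurable X P)
    (h : IndepFun X (Λ.indicator (1 : Ω → ℝ)) P) :
    ∫ ω, Λᶜ.indicator X ω ∂P = (1 - P.real Λ) * ∫ ω, X ω ∂P := by
  have hind : IndepFun X (fun ω => 1 - Λ.indicator (1 : Ω → ℝ) ω) P :=
    h.comp measurable_id (measurable_const.sub measurable_id)
  have hg : Integrable (Λ.indicator (1 : Ω → ℝ)) P := (integrable_const 1).indicator hΛ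
  rw [indicator_compl_eq_mul_one_sub_indicator_one, hind.integral_fun_mul_eq_mul_integral hX
    ((integrable_const 1).sub hg).aestronglyMeasurable, integral_sub (integrable_const 1) hg,
    integral_indicator_one hΛ]
  simp [mul_comm]

theorem ProbabilityTheory.IndepFun.integral_add_sq {X Y : Ω → ℝ} (h : IndepFun X Y P)
    (hX : Integrable X P) (hY : Integrable Y P) (hX2 : Integrable (fun ω => X ω ^ 2) P)
    (hY2 : Integrable (fun ω => Y ω ^ 2) P) :
    ∫ ω, (X ω + Y ω) ^ 2 ∂P =
      ∫ ω, X ω ^ 2 ∂P + 2 * ((∫ ω, X ω ∂P) * ∫ ω, Y ω ∂P) + ∫ ω, Y ω ^ 2 ∂P := by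
  have hXY : Integrable (fun ω => 2 * (X ω * Y ω)) P := (h.integrable_mul hX hY).const_mul 2
  simp_rw [add_sq, mul_assoc]
  rw [integral_add (f := fun ω => X ω ^ 2 + 2 * (X ω * Y ω)) (hX2.add hXY) hY2,
    integral_add hX2 hXY, integral_const_mul,
    h.integral_fun_mul_eq_mul_integral hX.aestronglyMeasurable hY.aestronglyMeasurable]

theorem indepFun_indicator_compl_of_iIndepFun {S X : Ω → ℝ} {Λ : Set Ω} (hS : Measurable S)
    (hX : Measurable X) (hΛ : MeasurableSet Λ) (h : iIndepFun ![S, X, Λ.indicator 1] P) :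
    IndepFun X (Λ.indicator (1 : Ω → ℝ)) P ∧ IndepFun S (Λᶜ.indicator X) P := by
  have hm : ∀ i, Measurable (![S, X, Λ.indicator 1] i) := by
    intro i
    fin_cases i
    exacts [hS, hX, measurable_one.indicator hΛ]
  refine ⟨by simpa using h.indepFun (show (1 : Fin 3) ≠ 2 by decide), ?_⟩
  have hpair : IndepFun (fun ω => (X ω, Λ.indicator (1 : Ω → ℝ) ω)) S P := by
    simpa using h.indepFun_prodMk hm 1 2 0 (by decide) (by decide)
  rw [indicator_compl_eq_mul_one_sub_indicator_one]
  exact (hpair.comp (measurable_fst.mul (measurable_const.sub measurable_snd))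
    measurable_id).symm

end Moments

section Algebra

variable {lam γ μ σ w : ℝ}

theorem hem1_fixed_point_quadratic (hμ : 0 < μ) (hlam : 0 < lam) (hγ : 0 < γ) (hσ1 : σ < 1)
    (hσfix : σ = lam / (lam + μ - μ * σ) * (γ / (γ + μ - μ * σ))) :
    μ ^ 2 * σ ^ 2 - μ ^ 2 * σ - (lam + γ) * μ * σ + lam * γ = 0 := by
  have hc : 0 < μ - μ * σ := by nlinarith
  have hrel : σ * ((lam + μ - μ * σ) * (γ + μ - μ * σ)) = lam * γ := by
    rw [div_mul_div_comm, eq_div_iff (mul_pos (by linarith) (by linarith)).ne'] at hσfix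
    linarith
  have hfac : (σ - 1) * (μ ^ 2 * σ ^ 2 - μ ^ 2 * σ - (lam + γ) * μ * σ + lam * γ) = 0 := by
    linear_combination hrel
  exact (mul_eq_zero.mp hfac).resolve_left (sub_ne_zero.mpr hσ1.ne)

theorem hem1_weight_mul_pos (hμ : 0 < μ) (hlam : 0 < lam) (hγ : 0 < γ) (hne : lam ≠ γ)
    (hσ1 : σ < 1) (hw : w = γ * (γ + μ - μ * σ) / ((γ - lam) * (lam + γ + μ - μ * σ))) :
    0 < w * (γ - lam) := by
  have hc : 0 < μ - μ * σ := by nlinarith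
  have hgl : γ - lam ≠ 0 := sub_ne_zero.mpr hne.symm
  have : w * (γ - lam) = γ * (γ + μ - μ * σ) / (lam + γ + μ - μ * σ) := by
    rw [hw]; field_simp
  rw [this]
  apply div_pos <;> nlinarith

theorem hem1_mean_identity (hμ : 0 < μ) (hlam : 0 < lam) (hγ : 0 < γ) (hne : lam ≠ γ)
    (hσ1 : σ < 1) (hQ : μ ^ 2 * σ ^ 2 - μ ^ 2 * σ - (lam + γ) * μ * σ + lam * γ = 0)
    (hw : w = γ * (γ + μ - μ * σ) / ((γ - lam) * (lam + γ + μ - μ * σ))) :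
    1 / μ + (1 - σ) * (w / lam + (1 - w) / γ) = 1 / lam + 1 / γ := by
  have hgl : γ - lam ≠ 0 := sub_ne_zero.mpr hne.symm
  have hC : lam + γ + μ - μ * σ ≠ 0 := by nlinarith
  rw [hw]
  field_simp
  linear_combination (γ ^ 2 - lam ^ 2) * hQ

theorem hem1_second_moment_identity (hμ : 0 < μ) (hlam : 0 < lam) (hγ : 0 < γ) (hne : lam ≠ γ)
    (hσ1 : σ < 1) (hQ : μ ^ 2 * σ ^ 2 - μ ^ 2 * σ - (lam + γ) * μ * σ + lam * γ = 0)
    (hw : w = γ * (γ + μ - μ * σ) / ((γ - lam) * (lam + γ + μ - μ * σ))) :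
    2 / μ ^ 2 + 2 * (1 / μ * ((1 - σ) * (w / lam + (1 - w) / γ))) +
        (1 - σ) * (2 * (w / lam ^ 2 + (1 - w) / γ ^ 2)) =
      2 * (1 / γ ^ 2 + 1 / lam ^ 2 + (1 + σ) / (lam * γ)) := by
  have hgl : γ - lam ≠ 0 := sub_ne_zero.mpr hne.symm
  have hC : lam + γ + μ - μ * σ ≠ 0 := by nlinarith
  rw [hw]
  field_simp
  linear_combination (μ * γ ^ 3 + μ * lam * γ ^ 2 - μ * lam ^ 2 * γ - μ * lam ^ 3 + lam * γ ^ 3 -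
    lam ^ 3 * γ) * hQ

end Algebra

theorem hem1_interdeparture_moments_general
    {Ω : Type*} [MeasurableSpace Ω] (P : Measure Ω) [IsProbabilityMeasure P]
    (lam γ μ : ℝ) (hlam : 0 < lam) (hγ : 0 < γ) (hμ : 0 < μ) (hne : lam ≠ γ)
    (σ : ℝ) (hσ0 : 0 < σ) (hσ1 : σ < 1)
    (hσfix : σ = lam / (lam + μ - μ * σ) * (γ / (γ + μ - μ * σ)))
    (w : ℝ) (hw : w = γ * (γ + μ - μ * σ) / ((γ - lam) * (lam + γ + μ - μ * σ)))
    (S XR : Ω → ℝ) (Λ : Set Ω) (hΛmeas : MeasurableSet Λ)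
    (hS : IsExpRV P μ S)
    (hXRmeas : Measurable XR)
    (hXR : ∀ t : ℝ, 0 ≤ t →
      P {ω | XR ω > t} =
        ENNReal.ofReal (∫ s in Set.Ioi t,
          (w * lam * Real.exp (-lam * s) + (1 - w) * γ * Real.exp (-γ * s))))
    (hΛprob : P Λ = ENNReal.ofReal σ)
    (hindep : iIndepFun (m := fun _ : Fin 3 => (inferInstance : MeasurableSpace ℝ))
      ![S, XR, Set.indicator Λ 1] P)
    (Y : Ω → ℝ) (hY : Y = fun ω => S ω + Set.indicator Λᶜ XR ω) :
    (∫ ω, Y ω ∂P) = 1 / lam + 1 / γ ∧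
      (∫ ω, Y ω ^ 2 ∂P) = 2 * (1 / γ ^ 2 + 1 / lam ^ 2 + (1 + σ) / (lam * γ)) := by
  have hPΛ : P.real Λ = σ := by rw [measureReal_def, hΛprob, ENNReal.toReal_ofReal hσ0.le]
  obtain ⟨⟨hSint, hS1⟩, hSint2, hS2⟩ := hS.integral_and_integral_sq hμ
  obtain ⟨⟨hXint, hX1⟩, hXint2, hX2⟩ := integral_and_integral_sq_of_tail_eq_exp_mix hXRmeas
    hlam hγ (add_sub_cancel w 1)
    (fun t ht => exp_mix_nonneg (hem1_weight_mul_pos hμ hlam hγ hne hσ1 hw) ht)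
    (fun t ht => by rw [← integral_Ioi_exp_mix_density hlam hγ]; exact hXR t ht)
  obtain ⟨hXΛ, hSZ⟩ := indepFun_indicator_compl_of_iIndepFun hS.1 hXRmeas hΛmeas hindep
  have hsq : (fun ω => Λᶜ.indicator XR ω ^ 2) = Λᶜ.indicator (fun ω => XR ω ^ 2) :=
    (Set.indicator_comp_of_zero (g := fun x : ℝ => x ^ 2) (zero_pow two_ne_zero)).symm
  have hZ1 : ∫ ω, Λᶜ.indicator XR ω ∂P = (1 - σ) * (w / lam + (1 - w) / γ) := by
    rw [integral_indicator_compl_of_indepFun hΛmeas hXint.1 hXΛ, hPΛ, hX1]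
  have hZ2 : ∫ ω, Λᶜ.indicator XR ω ^ 2 ∂P = (1 - σ) * (2 * (w / lam ^ 2 + (1 - w) / γ ^ 2)) := by
    rw [hsq, integral_indicator_compl_of_indepFun hΛmeas hXint2.1
      (hXΛ.comp (measurable_id.pow_const 2) measurable_id), hPΛ, hX2]
  have hQ := hem1_fixed_point_quadratic hμ hlam hγ hσ1 hσfix
  subst hY
  constructor
  · rw [integral_add hSint (hXint.indicator hΛmeas.compl), hS1, hZ1]
    exact hem1_mean_identity hμ hlam hγ hne hσ1 hQ hw
  · rw [hSZ.integral_add_sq hSint (hXint.indicator hΛmeas.compl) hSint2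
      (hsq ▸ hXint2.indicator hΛmeas.compl), hS2, hS1, hZ1, hZ2]
    exact hem1_second_moment_identity hμ hlam hγ hne hσ1 hQ hw

/-- First two moments of the inter-departure time of the HE/M/1/∞ queue: with
`σ ∈ (0,1)` the root of `σ = (λ/(λ+μ-μσ))(γ/(γ+μ-μσ))` and
`w = γ(γ+μ-μσ)/((γ-λ)(λ+γ+μ-μσ))`, if `Y` equals `S ~ Exp(μ)` with probability `σ` and
`S + X^R` with probability `1-σ`, where `X^R` has density
`f(t) = wλe^{-λt} + (1-w)γe^{-γt}` and all components are independent, then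
`E[Y] = 1/λ + 1/γ` and `E[Y²] = 2(1/γ² + 1/λ² + (1+σ)/(λγ))`. -/
theorem hem1_interdeparture_moments
    {Ω : Type*} [MeasurableSpace Ω] (P : Measure Ω) [IsProbabilityMeasure P]
    (lam γ μ : ℝ) (hlam : 0 < lam) (hγ : 0 < γ) (hμ : 0 < μ) (hne : lam ≠ γ)
    (hstab : lam * γ < μ * (lam + γ))
    (σ : ℝ) (hσ0 : 0 < σ) (hσ1 : σ < 1)
    (hσfix : σ = lam / (lam + μ - μ * σ) * (γ / (γ + μ - μ * σ)))
    (w : ℝ) (hw : w = γ * (γ + μ - μ * σ) / ((γ - lam) * (lam + γ + μ - μ * σ)))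
    (S XR : Ω → ℝ) (Λ : Set Ω) (hΛmeas : MeasurableSet Λ)
    (hS : IsExpRV P μ S)
    (hXRmeas : Measurable XR)
    (hXR : ∀ t : ℝ, 0 ≤ t →
      P {ω | XR ω > t} =
        ENNReal.ofReal (∫ s in Set.Ioi t,
          (w * lam * Real.exp (-lam * s) + (1 - w) * γ * Real.exp (-γ * s))))
    (hΛprob : P Λ = ENNReal.ofReal σ)
    (hindep : iIndepFun (m := fun _ : Fin 3 => (inferInstance : MeasurableSpace ℝ))
      ![S, XR, Set.indicator Λ 1] P)
    (Y : Ω → ℝ) (hY : Y = fun ω => S ω + Set.indicator Λᶜ XR ω) :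
    (∫ ω, Y ω ∂P) = 1 / lam + 1 / γ ∧
      (∫ ω, Y ω ^ 2 ∂P) = 2 * (1 / γ ^ 2 + 1 / lam ^ 2 + (1 + σ) / (lam * γ)) :=
  hem1_interdeparture_moments_general P lam γ μ hlam hγ hμ hne σ hσ0 hσ1 hσfix w hw S XR Λ hΛmeas hS
    hXRmeas hXR hΛprob hindep Y hY
end
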